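/- gss is invariant under environment extension: if sce and sce' are SCEs with sce' extending sce (sce ⊆ sce' as finite maps), every generic signature name occurring in constructors of sce is well-formed in sce, no naked type variable occurs among supersignatures of constructors of sce, all type variables used in constructors of sce are declared in their type-variables components, and ggnm is a ground signature name well-formed in sce, then gss(sce', ggnm) = gss(sce, ggnm). -/

import Mathlib

/-- Type names: either a type variable (from `X`) or a generic signature name,
i.e. a signature constructor name (from `N`) applied to a list of type names. -/
inductive TName (N X : Type) : Type
  | var : X → TName N X
  | gen : N → List (TName N X) → TName N X

/-- Occurrence of the type variable `y` in a type name. -/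
inductive Occurs {N X : Type} (y : X) : TName N X → Prop
  | var : Occurs y (TName.var y)
  | arg {nm : N} {args : List (TName N X)} {t : TName N X} :
      t ∈ args → Occurs y t → Occurs y (TName.gen nm args)

/-- Ground signature names: generic signature names containing no type variables. -/
inductive IsGround {N X : Type} : TName N X → Prop
  | gen {nm : N} {args : List (TName N X)} :
      (∀ t ∈ args, IsGround t) → IsGround (TName.gen nm args)

/-- Occurrence of the signature constructor name `n` (as the head of some
generic signature name) inside a type name. -/
inductive NameOccurs {N X : Type} (n : N) : TName N X → Prop
  | head {args : List (TName N X)} : NameOccurs n (TName.gen n args)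
  | arg {nm : N} {args : List (TName N X)} {t : TName N X} :
      t ∈ args → NameOccurs n t → NameOccurs n (TName.gen nm args)

/-- The outermost name (head) of a type name, if any. -/
def TName.head? {N X : Type} : TName N X → Option N
  | .var _ => none
  | .gen nm _ => some nm

/-- Name substitution `{V̄ ↦ TN̄}`: a type variable in `V` is mapped to the
element of `TN` at the corresponding position, other variables are left
unchanged, and substitution acts homomorphically on generic signature names. -/
def substT {N X : Type} [DecidableEq X] (V : List X) (TN : List (TName N X)) :
    TName N X → TName N X
  | .var y =>
      match (V.zip TN).lookup y with
      | some t => t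
      | none => .var y
  | .gen nm args => .gen nm (args.attach.map fun t => substT V TN t.1)
decreasing_by
  simp_wf
  have := List.sizeOf_lt_of_mem t.2
  omega

/-- A signature constructor: a name, a list of (distinct) type variables,
supersignatures, field signatures and method signatures. -/
structure SigCon (N X L : Type) where
  name : N
  tvars : List X
  supers : List (TName N X)
  fields : List (L × TName N X)
  methods : List (L × List (TName N X) × TName N X)

/-- A signature constructor environment: a (finite) map from names to
signature constructors. -/
abbrev SCE (N X L : Type) := N → Option (SigCon N X L)

/-- Well-formedness of a type name in an SCE: each signature constructor name
used is bound in the environment and applied to the declared number of type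
arguments, recursively. -/
inductive WFT {N X L : Type} (sce : SCE N X L) : TName N X → Prop
  | var (y : X) : WFT sce (TName.var y)
  | gen {nm : N} {args : List (TName N X)} (sc : SigCon N X L) :
      sce nm = some sc → args.length = sc.tvars.length →
      (∀ t ∈ args, WFT sce t) → WFT sce (TName.gen nm args)

/-- The type variable `y` occurs somewhere in the signature constructor `sc`. -/
def OccursInSC {N X L : Type} (y : X) (sc : SigCon N X L) : Prop :=
  (∃ s ∈ sc.supers, Occurs y s) ∨ (∃ f ∈ sc.fields, Occurs y f.2) ∨
    (∃ m ∈ sc.methods, (∃ a ∈ m.2.1, Occurs y a) ∨ Occurs y m.2.2)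

/-- The signature constructor name `n` is referenced somewhere inside `sc`. -/
def NameInSC {N X L : Type} (n : N) (sc : SigCon N X L) : Prop :=
  (∃ s ∈ sc.supers, NameOccurs n s) ∨ (∃ f ∈ sc.fields, NameOccurs n f.2) ∨
    (∃ m ∈ sc.methods, (∃ a ∈ m.2.1, NameOccurs n a) ∨ NameOccurs n m.2.2)

/-- All type names occurring in the components of `sc` are well-formed in `sce`. -/
def WFSC {N X L : Type} (sce : SCE N X L) (sc : SigCon N X L) : Prop :=
  (∀ s ∈ sc.supers, WFT sce s) ∧ (∀ f ∈ sc.fields, WFT sce f.2) ∧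
    (∀ m ∈ sc.methods, (∀ a ∈ m.2.1, WFT sce a) ∧ WFT sce m.2.2)

/-- The "direct supersignature" relation on names induced by an SCE:
`SuperRel sce n m` iff `m` is the head of one of the supersignatures of the
constructor bound to `n`. -/
def SuperRel {N X L : Type} (sce : SCE N X L) (n m : N) : Prop :=
  ∃ sc, sce n = some sc ∧ ∃ s ∈ sc.supers, s.head? = some m

/-- Every member (field or method) a constructor shares (same label) with an
instantiation of one of its supersignature constructors has exactly the same
signature as in that instantiation. -/
def MemberMatch {N X L : Type} [DecidableEq X] (sce : SCE N X L) : Prop :=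
  ∀ n sc, sce n = some sc →
    ∀ (snm : N) (sargs : List (TName N X)), TName.gen snm sargs ∈ sc.supers →
      ∀ ssc, sce snm = some ssc →
        (∀ (l : L) (t t' : TName N X), (l, t) ∈ sc.fields → (l, t') ∈ ssc.fields →
          t = substT ssc.tvars sargs t') ∧
        (∀ (l : L) (as_ : List (TName N X)) (r : TName N X)
            (as' : List (TName N X)) (r' : TName N X),
          (l, as_, r) ∈ sc.methods → (l, as', r') ∈ ssc.methods →
          as_ = as'.map (substT ssc.tvars sargs) ∧ r = substT ssc.tvars sargs r')

/-- Well-formedness of a signature constructor environment. -/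
structure WFSCE {N X L : Type} [DecidableEq X] (sce : SCE N X L) : Prop where
  finite : Set.Finite {n | (sce n).isSome}
  namesMatch : ∀ n sc, sce n = some sc → sc.name = n
  tvarsNodup : ∀ n sc, sce n = some sc → sc.tvars.Nodup
  refsClosed : ∀ n sc, sce n = some sc → ∀ m, NameInSC m sc → (sce m).isSome
  wfNames : ∀ n sc, sce n = some sc → WFSC sce sc
  tvarsDecl : ∀ n sc, sce n = some sc → ∀ y, OccursInSC y sc → y ∈ sc.tvars
  noNakedSuper : ∀ n sc, sce n = some sc → ∀ s ∈ sc.supers, ∀ y : X, s ≠ TName.var y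
  acyclic : ∀ n, ¬ Relation.TransGen (SuperRel sce) n n
  memberMatch : MemberMatch sce

/-- `s` is a direct ground supersignature name of `g` in `sce`. -/
def DirectSuper {N X L : Type} [DecidableEq X] (sce : SCE N X L)
    (g s : TName N X) : Prop :=
  ∃ (nm : N) (args : List (TName N X)) (sc : SigCon N X L),
    g = TName.gen nm args ∧ sce nm = some sc ∧
      ∃ t ∈ sc.supers, s = substT sc.tvars args t

/-- `gss sce g`: the set of all ground supersignature names of `g`, obtained by
transitively taking direct ground supersignature names. -/
def gss {N X L : Type} [DecidableEq X] (sce : SCE N X L) (g : TName N X) :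
    Set (TName N X) :=
  {s | Relation.TransGen (DirectSuper sce) g s}

/-- `SCEExt sce' sce`: the environment `sce'` extends `sce` (as finite maps). -/
def SCEExt {N X L : Type} (sce' sce : SCE N X L) : Prop :=
  ∀ n sc, sce n = some sc → sce' n = some sc

/-- Subsigning of generic object signatures: `Subsign gos2 gos1` (gos2 ⊴ gos1). -/
def Subsign {N X L : Type} [DecidableEq X]
    (gos2 gos1 : TName N X × SCE N X L) : Prop :=
  SCEExt gos2.2 gos1.2 ∧ (gos2.1 = gos1.1 ∨ gos1.1 ∈ gss gos2.2 gos2.1)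

/-- A well-formed generic object signature: a ground signature name
well-formed in a well-formed SCE. -/
def WFGOS {N X L : Type} [DecidableEq X] (gos : TName N X × SCE N X L) : Prop :=
  WFSCE gos.2 ∧ WFT gos.2 gos.1 ∧ IsGround gos.1

/-- A (candidate) ground signature: a quadruple of a name, supersignature
names, field signatures and method signatures (type-name components). -/
structure GSig (N X L : Type) where
  name : TName N X
  supers : List (TName N X)
  fields : List (L × TName N X)
  methods : List (L × List (TName N X) × TName N X)

/-- `gs` is a ground signature: all its components are ground signature names. -/
def GSig.IsGroundSig {N X L : Type} (gs : GSig N X L) : Prop :=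
  IsGround gs.name ∧ (∀ s ∈ gs.supers, IsGround s) ∧
    (∀ f ∈ gs.fields, IsGround f.2) ∧
    (∀ m ∈ gs.methods, (∀ a ∈ m.2.1, IsGround a) ∧ IsGround m.2.2)

/-- `GenToGnd`: instantiating the signature constructor `sc` with the type
arguments `args`, taking `(nm, args)` as the name of the result. -/
def genToGnd {N X L : Type} [DecidableEq X] (nm : N) (args : List (TName N X))
    (sc : SigCon N X L) : GSig N X L where
  name := TName.gen nm args
  supers := sc.supers.map (substT sc.tvars args)
  fields := sc.fields.map fun f => (f.1, substT sc.tvars args f.2)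
  methods := sc.methods.map fun m =>
    (m.1, m.2.1.map (substT sc.tvars args), substT sc.tvars args m.2.2)

/-- The inductively defined set `GGN = N × GGN*` of ground signature names. -/
inductive GGN (N : Type) : Type
  | node : N → List (GGN N) → GGN N

/-- The canonical interpretation of a ground signature name as a generic
signature name. -/
def GGN.toTName {N X : Type} : GGN N → TName N X
  | .node nm args => TName.gen nm (args.attach.map fun a => a.1.toTName)
decreasing_by
  simp_wf
  have := List.sizeOf_lt_of_mem a.2
  omega

/-- The outermost name of a ground signature name (its erasure). -/
def GGN.headName {N : Type} : GGN N → N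
  | .node nm _ => nm

/-- A (non-generic) NOOP signature. -/
structure NSig (N L : Type) where
  name : N
  supers : List N
  fields : List (L × N)
  methods : List (L × List N × N)

/-- A NOOP signature environment. -/
abbrev NEnv (N L : Type) := N → Option (NSig N L)

/-- The name `m` is referenced inside the NOOP signature `s`. -/
def NameInNSig {N L : Type} (m : N) (s : NSig N L) : Prop :=
  m ∈ s.supers ∨ (∃ f ∈ s.fields, f.2 = m) ∨
    (∃ mm ∈ s.methods, m ∈ mm.2.1 ∨ mm.2.2 = m)

/-- The direct supersignature relation on names induced by a NOOP environment. -/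
def NSuperRel {N L : Type} (env : NEnv N L) (n m : N) : Prop :=
  ∃ s, env n = some s ∧ m ∈ s.supers

/-- Well-formedness of a NOOP signature environment. -/
structure WFNEnv {N L : Type} (env : NEnv N L) : Prop where
  finite : Set.Finite {n | (env n).isSome}
  namesMatch : ∀ n s, env n = some s → s.name = n
  refsClosed : ∀ n s, env n = some s → ∀ m, NameInNSig m s → (env m).isSome
  acyclic : ∀ n, ¬ Relation.TransGen (NSuperRel env) n n
  memberMatch : ∀ n s, env n = some s → ∀ m ∈ s.supers, ∀ ss, env m = some ss →
    (∀ (l : L) (t t' : N), (l, t) ∈ s.fields → (l, t') ∈ ss.fields → t = t') ∧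
    (∀ (l : L) (as_ : List N) (r : N) (as' : List N) (r' : N),
      (l, as_, r) ∈ s.methods → (l, as', r') ∈ ss.methods → as_ = as' ∧ r = r')

/-- Erasure of a type name: a naked type variable erases to `Object`, a generic
signature name erases to its outermost name. -/
def eraseT {N X : Type} (Object : N) : TName N X → N
  | .var _ => Object
  | .gen nm _ => nm

/-- Erasure of a signature constructor to a NOOP signature. -/
def eraseSC {N X L : Type} (Object : N) (sc : SigCon N X L) : NSig N L where
  name := sc.name
  supers := sc.supers.map (eraseT Object)
  fields := sc.fields.map fun f => (f.1, eraseT Object f.2)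
  methods := sc.methods.map fun m =>
    (m.1, m.2.1.map (eraseT Object), eraseT Object m.2.2)

/-- Erasure of a signature constructor environment. -/
def eraseSCE {N X L : Type} (Object : N) (sce : SCE N X L) : NEnv N L :=
  fun n => (sce n).map (eraseSC Object)

/-
Well-formedness in `sce` is preserved by instantiating a well-formed type name with well-formed
arguments, so every name reached from a well-formed `ggnm` by direct-supersignature steps in `sce'`
is well-formed in `sce`. At a name well-formed in `sce` the constructor `sce'` finds is the one
`sce` binds, so each step in `sce'` is already a step in `sce`.
-/

theorem List.mem_of_lookup_eq_some {α β : Type*} [BEq α] [LawfulBEq α] {l : List (α × β)} {k : α}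
    {b : β} (h : l.lookup k = some b) : (k, b) ∈ l := by
  obtain ⟨l₁, l₂, rfl, -⟩ := List.lookup_eq_some_iff.mp h
  simp

section

variable {N X L : Type} [DecidableEq X]

theorem WFT.substT {sce : SCE N X L} {V : List X} {TN : List (TName N X)}
    (hTN : ∀ u ∈ TN, WFT sce u) {t : TName N X} (ht : WFT sce t) :
    WFT sce (substT V TN t) := by
  induction ht with
  | var y =>
    rw [_root_.substT]
    split
    case h_1 u hu => exact hTN u (List.of_mem_zip (List.mem_of_lookup_eq_some hu)).2
    case h_2 => exact .var y
  | gen sc hsc hlen _ ih =>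
    rw [_root_.substT]
    refine .gen sc hsc (by simpa using hlen) ?_
    simp only [List.mem_map, List.mem_attach, true_and, Subtype.exists]
    rintro _ ⟨a, ha, rfl⟩
    exact ih a ha

theorem DirectSuper.mono {sce sce' : SCE N X L} (hext : SCEExt sce' sce) {g s : TName N X}
    (h : DirectSuper sce g s) : DirectSuper sce' g s := by
  obtain ⟨nm, args, sc, rfl, hsc, t, ht, rfl⟩ := h
  exact ⟨nm, args, sc, rfl, hext nm sc hsc, t, ht, rfl⟩

theorem DirectSuper.of_ext {sce sce' : SCE N X L} (hext : SCEExt sce' sce) {g s : TName N X}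
    (hg : WFT sce g) (h : DirectSuper sce' g s) : DirectSuper sce g s := by
  obtain ⟨nm, args, sc, rfl, hsc', t, ht, rfl⟩ := h
  cases hg with
  | gen sc₀ hsc₀ _ _ =>
    obtain rfl : sc₀ = sc := Option.some_injective _ ((hext nm sc₀ hsc₀).symm.trans hsc')
    exact ⟨nm, args, sc₀, rfl, hsc₀, t, ht, rfl⟩

theorem DirectSuper.wft {sce : SCE N X L} (hwfn : ∀ n sc, sce n = some sc → WFSC sce sc)
    {g s : TName N X} (hg : WFT sce g) (h : DirectSuper sce g s) : WFT sce s := by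
  obtain ⟨nm, args, sc, rfl, hsc, t, ht, rfl⟩ := h
  cases hg with
  | gen sc₀ hsc₀ _ hargs =>
    obtain rfl : sc₀ = sc := Option.some_injective _ (hsc₀.symm.trans hsc)
    exact WFT.substT hargs ((hwfn nm sc₀ hsc).1 t ht)

theorem transGen_directSuper_of_ext {sce sce' : SCE N X L} (hext : SCEExt sce' sce)
    (hwfn : ∀ n sc, sce n = some sc → WFSC sce sc) {g s : TName N X} (hg : WFT sce g)
    (h : Relation.TransGen (DirectSuper sce') g s) : Relation.TransGen (DirectSuper sce) g s := by
  induction h using Relation.TransGen.head_induction_on with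
  | single h => exact .single (h.of_ext hext hg)
  | head h _ ih =>
    have h := h.of_ext hext hg
    exact .head h (ih (h.wft hwfn hg))

end

theorem gss_invariant_under_extension_general {N X L : Type} [DecidableEq X]
    (sce sce' : SCE N X L) (hext : SCEExt sce' sce)
    (hwfn : ∀ n sc, sce n = some sc → WFSC sce sc)
    (ggnm : TName N X) (hwf : WFT sce ggnm) :
    gss sce' ggnm = gss sce ggnm := by
  ext s
  exact ⟨transGen_directSuper_of_ext hext hwfn hwf,
    Relation.TransGen.mono (fun _ _ => DirectSuper.mono hext) _ _⟩

/-- `gss` is invariant under environment extension: if `sce'`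
extends `sce`, all generic signature names occurring in constructors of `sce`
are well-formed in `sce`, no naked type variable occurs among supersignatures,
all occurring type variables are declared, and `ggnm` is a ground signature
name well-formed in `sce`, then `gss(sce', ggnm) = gss(sce, ggnm)`. -/
theorem gss_invariant_under_extension {N X L : Type} [DecidableEq X]
    (sce sce' : SCE N X L) (hext : SCEExt sce' sce)
    (hwfn : ∀ n sc, sce n = some sc → WFSC sce sc)
    (hnk : ∀ n sc, sce n = some sc → ∀ s ∈ sc.supers, ∀ y : X, s ≠ TName.var y)
    (htv : ∀ n sc, sce n = some sc → ∀ y : X, OccursInSC y sc → y ∈ sc.tvars)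
    (ggnm : TName N X) (hgr : IsGround ggnm) (hwf : WFT sce ggnm) :
    gss sce' ggnm = gss sce ggnm :=
  gss_invariant_under_extension_general sce sce' hext hwfn ggnm hwf
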